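/- arXiv:1008.1674 — 5 statements merged into one kernel-verified Lean document; each statement's English description precedes it below -/
import Mathlib

section
/- Let F : [0,∞) → [0,∞) be increasing and left-continuous with F(0) = 0, and define φ(y) = ∫₀^y F⁻¹(u) du and ψ(y) = ∫₀^{F⁻¹(y)} (√y − √{F(λ)})² dλ. Then φ(y/2) ≤ ψ(y) for all y ≥ 0. -/
/-!
Writing `z = y / 2` and `c = F⁻¹(y)`, the integral `φ(z) = ∫₀^z F⁻¹(u) du` is at most the area of
`{(u, λ) ∈ (0, z] × (0, c] | F λ ≤ u}`, because `F ≤ u` on `(0, F⁻¹(u))`. Integrating that area in the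
other order gives at most `∫₀^c (z − F λ)⁺ dλ`, and `z − F λ ≤ (√y − √(F λ))²` pointwise.
-/

open MeasureTheory Set

lemma half_sub_le_sq_sqrt_sub_sqrt {y a : ℝ} (hy : 0 ≤ y) (ha : 0 ≤ a) :
    y / 2 - a ≤ (√y - √a) ^ 2 := by
  nlinarith [Real.sq_sqrt hy, Real.sq_sqrt ha, sq_nonneg (√y - 2 * √a)]

lemma volume_Ici_inter_Ioc_le (x w z : ℝ) :
    volume (Ici x ∩ Ioc w z) ≤ ENNReal.ofReal (z - x) :=
  (measure_mono (t := Icc x z) fun _ hu => ⟨hu.1, hu.2.2⟩).trans_eq Real.volume_Icc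

lemma lintegral_measure_sublevel_eq {β : Type*} [MeasurableSpace β] {F : β → ℝ}
    (hF : Measurable F) (μ : Measure ℝ) (ν : Measure β) [SFinite μ] [SFinite ν] :
    ∫⁻ u, ν {l | F l ≤ u} ∂μ = ∫⁻ l, μ (Ici (F l)) ∂ν := by
  have hS : MeasurableSet {p : ℝ × β | F p.2 ≤ p.1} :=
    measurableSet_le (hF.comp measurable_snd) measurable_fst
  exact (Measure.prod_apply hS).symm.trans (Measure.prod_apply_symm hS)

section GeneralizedInverse

variable {F : ℝ → ℝ} {u a : ℝ}

lemma le_of_lt_isLUB_sublevel (hF : Monotone F) (ha : IsLUB {l | 0 ≤ l ∧ F l ≤ u} a) {l : ℝ}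
    (hl : l < a) : F l ≤ u := by
  obtain ⟨d, hd, hld⟩ := (lt_isLUB_iff ha).1 hl
  exact (hF hld.le).trans hd.2

lemma ofReal_le_volume_sublevel_inter_Ioc (hF : Monotone F)
    (ha : IsLUB {l | 0 ≤ l ∧ F l ≤ u} a) {c : ℝ} (hac : a ≤ c) :
    ENNReal.ofReal a ≤ volume ({l | F l ≤ u} ∩ Ioc 0 c) := by
  have hsub : Ioo 0 a ⊆ {l | F l ≤ u} ∩ Ioc 0 c := fun l hl =>
    ⟨le_of_lt_isLUB_sublevel hF ha hl.2, hl.1, hl.2.le.trans hac⟩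
  simpa only [Real.volume_Ioo, sub_zero] using measure_mono (μ := volume) hsub

/-- The inequality form of `∫₀^z F⁻¹ = ∫₀^{F⁻¹(z)} (z − F)`, valid for any `c ≥ F⁻¹` on `(0, z]`. -/
lemma lintegral_isLUB_sublevel_le (hF : Monotone F) {G : ℝ → ℝ} {z c : ℝ}
    (hG : ∀ u ∈ Ioc 0 z, IsLUB {l | 0 ≤ l ∧ F l ≤ u} (G u)) (hGc : ∀ u ∈ Ioc 0 z, G u ≤ c) :
    ∫⁻ u in Ioc 0 z, ENNReal.ofReal (G u) ≤ ∫⁻ l in Ioc 0 c, ENNReal.ofReal (z - F l) :=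
  calc ∫⁻ u in Ioc 0 z, ENNReal.ofReal (G u)
      ≤ ∫⁻ u in Ioc 0 z, volume.restrict (Ioc 0 c) {l | F l ≤ u} :=
        setLIntegral_mono' measurableSet_Ioc fun u hu => by
          rw [Measure.restrict_apply (measurableSet_le hF.measurable measurable_const)]
          exact ofReal_le_volume_sublevel_inter_Ioc hF (hG u hu) (hGc u hu)
    _ = ∫⁻ l in Ioc 0 c, volume.restrict (Ioc 0 z) (Ici (F l)) :=
        lintegral_measure_sublevel_eq hF.measurable _ _
    _ ≤ ∫⁻ l in Ioc 0 c, ENNReal.ofReal (z - F l) :=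
        setLIntegral_mono' measurableSet_Ioc fun l _ => by
          rw [Measure.restrict_apply measurableSet_Ici]
          exact volume_Ici_inter_Ioc_le _ _ _

end GeneralizedInverse

lemma integrableOn_sq_sqrt_sub_sqrt {F : ℝ → ℝ} (hF : Monotone F) (y c : ℝ) :
    IntegrableOn (fun l => (√y - √(F l)) ^ 2) (Ioc 0 c) := by
  refine Measure.integrableOn_of_bounded (M := (√y + √(F c)) ^ 2) (by simp)
    (hF.measurable.sqrt.const_sub _ |>.pow_const 2).aestronglyMeasurable ?_
  refine (ae_restrict_iff' measurableSet_Ioc).2 (ae_of_all _ fun l hl => ?_)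
  have hFl : √(F l) ≤ √(F c) := Real.sqrt_le_sqrt (hF hl.2)
  rw [Real.norm_eq_abs, abs_sq]
  nlinarith [Real.sqrt_nonneg y, Real.sqrt_nonneg (F l)]

theorem stmt_4_general (F : ℝ → ℝ) (hmono : Monotone F) (hnn : ∀ x, 0 ≤ F x)
    (hF0 : ∀ x ≤ (0:ℝ), F x = 0)
    (Finv : ℝ → ℝ) (hFinv : ∀ u, 0 ≤ u → IsLUB {l : ℝ | 0 ≤ l ∧ F l ≤ u} (Finv u))
    (φ ψ : ℝ → ℝ)
    (hφ : ∀ y, φ y = ∫ u in (0:ℝ)..y, Finv u)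
    (hψ : ∀ y, ψ y = ∫ l in (0:ℝ)..(Finv y), (Real.sqrt y - Real.sqrt (F l)) ^ 2)
    (y : ℝ) (hy : 0 ≤ y) :
    φ (y / 2) ≤ ψ y := by
  have hFinv_nonneg : ∀ u, 0 ≤ u → 0 ≤ Finv u := fun u hu =>
    (hFinv u hu).1 ⟨le_rfl, (hF0 0 le_rfl).trans_le hu⟩
  have hFinv_mono : MonotoneOn Finv (Ici 0) := fun u hu v _ huv =>
    (hFinv u hu).mono (hFinv v (hu.trans huv)) fun _ hl => ⟨hl.1, hl.2.trans huv⟩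
  have hz : 0 ≤ y / 2 := by positivity
  have hlayer := lintegral_isLUB_sublevel_le hmono (z := y / 2) (c := Finv y)
    (fun u hu => hFinv u hu.1.le) fun u hu => hFinv_mono hu.1.le hy (hu.2.trans (by linarith))
  have hψ_int := integrableOn_sq_sqrt_sub_sqrt hmono y (Finv y)
  have hFinv_int : IntegrableOn Finv (Ioc 0 (y / 2)) :=
    (intervalIntegrable_iff_integrableOn_Ioc_of_le hz).1 <|
      (hFinv_mono.mono (by simp [uIcc_of_le hz, Icc_subset_Ici_self])).intervalIntegrable
  rw [hφ, hψ, intervalIntegral.integral_of_le hz, intervalIntegral.integral_of_le (hFinv_nonneg y hy),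
    integral_eq_lintegral_of_nonneg_ae ((ae_restrict_iff' measurableSet_Ioc).2
      (ae_of_all _ fun u hu => hFinv_nonneg u hu.1.le)) hFinv_int.aestronglyMeasurable,
    integral_eq_lintegral_of_nonneg_ae (ae_of_all _ fun _ => sq_nonneg _)
      hψ_int.aestronglyMeasurable]
  refine ENNReal.toReal_mono hψ_int.setLIntegral_lt_top.ne (hlayer.trans ?_)
  exact setLIntegral_mono' measurableSet_Ioc fun l _ =>
    ENNReal.ofReal_le_ofReal (half_sub_le_sq_sqrt_sub_sqrt hy (hnn l))

/-- Inequality (14): for `F : [0,∞) → [0,∞)` increasing, left-continuous with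
`F 0 = 0`, and `φ(y) = ∫₀^y F⁻¹(u) du`, `ψ(y) = ∫₀^{F⁻¹(y)} (√y − √(F λ))² dλ`,
one has `φ(y/2) ≤ ψ(y)` for all `y ≥ 0`. -/
theorem stmt_4 (F : ℝ → ℝ) (hmono : Monotone F) (hnn : ∀ x, 0 ≤ F x)
    (hF0 : ∀ x ≤ (0:ℝ), F x = 0)
    (hleftcont : ∀ x, ContinuousWithinAt F (Set.Iio x) x)
    (Finv : ℝ → ℝ) (hFinv : ∀ u, 0 ≤ u → IsLUB {l : ℝ | 0 ≤ l ∧ F l ≤ u} (Finv u))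
    (φ ψ : ℝ → ℝ)
    (hφ : ∀ y, φ y = ∫ u in (0:ℝ)..y, Finv u)
    (hψ : ∀ y, ψ y = ∫ l in (0:ℝ)..(Finv y), (Real.sqrt y - Real.sqrt (F l)) ^ 2)
    (y : ℝ) (hy : 0 ≤ y) :
    φ (y / 2) ≤ ψ y :=
  stmt_4_general F hmono hnn hF0 Finv hFinv φ ψ hφ hψ y hy
end

section
/- Let F : [0,∞) → [0,∞) be increasing and left-continuous with F(0)=0, and ψ(y) = ∫₀^{F⁻¹(y)} (√y − √{F(λ)})² dλ. Then ψ(y) = ∫₀^1 ∫₀^y F⁻¹(t²u) du dt. -/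
open MeasureTheory Set Real Filter

/-! For `0 ≤ c ≤ y` the inner integral `∫₀^y 𝟙[c ≤ t²u] du` equals `(y - c/t²)₊`, and integrating
this over `t ∈ (0, 1]` gives `(√y - √c)²`. For `0 ≤ v ≤ y`, left-continuity of `F` yields the
Galois connection `F λ ≤ v ↔ λ ≤ F⁻¹ v` on `λ ≥ 0`, hence `F⁻¹ v = ∫₀^{F⁻¹ y} 𝟙[F λ ≤ v] dλ`.
Substituting the first identity with `c = F λ` into `ψ y` and the second with `v = t²u` into the
right-hand side, the theorem becomes an exchange of the order of integration of a bounded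
measurable function on a box. -/

theorem Monotone.map_le_of_isLUB {α β : Type*} [LinearOrder α] [TopologicalSpace α]
    [OrderTopology α] [DenselyOrdered α] [NoMinOrder α] [Preorder β] [TopologicalSpace β]
    [ClosedIicTopology β] {F : α → β} (hF : Monotone F) {s : Set α} {a : α} {v : β}
    (hs : IsLUB s a) (hcont : ContinuousWithinAt F (Iio a) a) (hv : ∀ l ∈ s, F l ≤ v) :
    F a ≤ v := by
  refine _root_.le_of_tendsto hcont (eventually_nhdsWithin_of_forall fun l hl => ?_)
  obtain ⟨c, hc, hlc, -⟩ := hs.exists_between hl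
  exact (hF hlc.le).trans (hv c hc)

theorem le_iff_le_of_isLUB {F : ℝ → ℝ} {v a : ℝ} (hF : Monotone F)
    (hcont : ContinuousWithinAt F (Iio a) a) (ha : IsLUB {l | 0 ≤ l ∧ F l ≤ v} a) {l : ℝ}
    (hl : 0 ≤ l) : F l ≤ v ↔ l ≤ a :=
  ⟨fun h => ha.1 ⟨hl, h⟩, fun h => (hF h).trans (hF.map_le_of_isLUB ha hcont fun _ h => h.2)⟩

theorem integral_Ioc_ite_le_of_iff {F : ℝ → ℝ} {v a b : ℝ} (hb : 0 ≤ b) (hba : b ≤ a)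
    (h : ∀ l ∈ Ioc 0 a, F l ≤ v ↔ l ≤ b) :
    ∫ l in Ioc 0 a, (if F l ≤ v then (1 : ℝ) else 0) = b := by
  calc ∫ l in Ioc 0 a, (if F l ≤ v then (1 : ℝ) else 0)
      = ∫ l in Ioc 0 a, (Iic b).indicator 1 l :=
        setIntegral_congr_fun measurableSet_Ioc fun l hl => by
          simp only [indicator_apply, mem_Iic, h l hl, Pi.one_apply]
    _ = volume.real (Iic b ∩ Ioc 0 a) := by
        rw [integral_indicator_one measurableSet_Iic, measureReal_restrict_apply measurableSet_Iic]
    _ = b := by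
        rw [Iic_inter_Ioc_of_le hba, volume_real_Ioc_of_le hb, sub_zero]

theorem integral_Ioc_ite_le_eq_of_isLUB {F : ℝ → ℝ} {v w a b : ℝ} (hF : Monotone F)
    (hcont : ContinuousWithinAt F (Iio b) b) (hv : F 0 ≤ v) (hvw : v ≤ w)
    (hb : IsLUB {l | 0 ≤ l ∧ F l ≤ v} b) (ha : IsLUB {l | 0 ≤ l ∧ F l ≤ w} a) :
    ∫ l in Ioc 0 a, (if F l ≤ v then (1 : ℝ) else 0) = b :=
  integral_Ioc_ite_le_of_iff (hb.1 ⟨le_rfl, hv⟩)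
    (hb.mono ha fun _ hl => ⟨hl.1, hl.2.trans hvw⟩)
    fun _ hl => le_iff_le_of_isLUB hF hcont hb hl.1.le

theorem integral_Ioc_ite_le_mul {c s : ℝ} (y : ℝ) (hc : 0 ≤ c) (hs : 0 < s) :
    ∫ u in Ioc 0 y, (if c ≤ s * u then (1 : ℝ) else 0) = max (y - c / s) 0 := by
  have hcs : 0 ≤ c / s := div_nonneg hc hs.le
  calc ∫ u in Ioc 0 y, (if c ≤ s * u then (1 : ℝ) else 0)
      = ∫ u in Ioc 0 y, (Ici (c / s)).indicator 1 u :=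
        setIntegral_congr_fun measurableSet_Ioc fun u _ => by
          simp only [indicator_apply, mem_Ici, div_le_iff₀' hs, Pi.one_apply]
    _ = volume.real (Ioi (c / s) ∩ Ioc 0 y) := by
        rw [integral_indicator_one measurableSet_Ici, measureReal_restrict_apply measurableSet_Ici]
        exact measureReal_congr (ae_eq_set_inter Ioi_ae_eq_Ici.symm (EventuallyEq.refl _ _))
    _ = max (y - c / s) 0 := by
        rw [inter_comm, Ioc_inter_Ioi, max_eq_right hcs, volume_real_Ioc]

theorem integral_Ioc_max_sub_div_sq {c y : ℝ} (hc : 0 ≤ c) (hcy : c ≤ y) :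
    ∫ t in Ioc 0 1, max (y - c / t ^ 2) 0 = (√y - √c) ^ 2 := by
  rcases hc.eq_or_lt with rfl | hc
  · simp [max_eq_left hcy, sq_sqrt hcy]
  have hy : 0 < y := hc.trans_le hcy
  obtain ⟨p, hp, rfl⟩ : ∃ p, 0 < p ∧ y = p ^ 2 := ⟨√y, sqrt_pos.2 hy, (sq_sqrt hy.le).symm⟩
  obtain ⟨q, hq, rfl⟩ : ∃ q, 0 < q ∧ c = q ^ 2 := ⟨√c, by positivity, (sq_sqrt hc.le).symm⟩
  have hqp : q ≤ p := by nlinarith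
  have hb1 : q / p ≤ 1 := (div_le_one hp).2 hqp
  have hb : 0 < q / p := by positivity
  have hmax : ∀ t ∈ Ioc (0 : ℝ) 1,
      max (p ^ 2 - q ^ 2 / t ^ 2) 0 =
        (Ioi (q / p)).indicator (fun t => p ^ 2 - q ^ 2 / t ^ 2) t := by
    intro t ht
    have key : q / p < t ↔ q / t < p := by rw [div_lt_iff₀ hp, div_lt_iff₀ ht.1, mul_comm]
    have hqt : 0 < q / t := div_pos hq ht.1
    simp only [indicator_apply, mem_Ioi, key, ← div_pow]
    split_ifs with h
    · exact max_eq_left (by nlinarith)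
    · exact max_eq_right (by nlinarith)
  have hderiv : ∀ t ∈ uIcc (q / p) 1,
      HasDerivAt (fun t => p ^ 2 * t + q ^ 2 * t⁻¹) (p ^ 2 - q ^ 2 / t ^ 2) t := by
    intro t ht
    have ht0 : t ≠ 0 := (hb.trans_le (uIcc_of_le hb1 ▸ ht).1).ne'
    refine (((hasDerivAt_id' t).const_mul (p ^ 2)).add
      ((hasDerivAt_inv ht0).const_mul (q ^ 2))).congr_deriv ?_
    ring
  have hcont : ContinuousOn (fun t => p ^ 2 - q ^ 2 / t ^ 2) (uIcc (q / p) 1) :=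
    continuousOn_const.sub (continuousOn_const.div (continuousOn_pow 2) fun t ht =>
      pow_ne_zero 2 (hb.trans_le (uIcc_of_le hb1 ▸ ht).1).ne')
  calc ∫ t in Ioc 0 1, max (p ^ 2 - q ^ 2 / t ^ 2) 0
      = ∫ t in Ioc (q / p) 1, p ^ 2 - q ^ 2 / t ^ 2 := by
        rw [setIntegral_congr_fun measurableSet_Ioc hmax, setIntegral_indicator measurableSet_Ioi,
          Ioc_inter_Ioi, max_eq_right hb.le]
    _ = (√(p ^ 2) - √(q ^ 2)) ^ 2 := by
        rw [← intervalIntegral.integral_of_le hb1,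
          intervalIntegral.integral_eq_sub_of_hasDerivAt hderiv hcont.intervalIntegrable,
          sqrt_sq hp.le, sqrt_sq hq.le]
        field_simp
        ring

theorem sq_sqrt_sub_sqrt_eq_integral_Ioc_ite {c y : ℝ} (hc : 0 ≤ c) (hcy : c ≤ y) :
    (√y - √c) ^ 2 = ∫ t in Ioc 0 1, ∫ u in Ioc 0 y, (if c ≤ t ^ 2 * u then (1 : ℝ) else 0) := by
  rw [← integral_Ioc_max_sub_div_sq hc hcy]
  exact setIntegral_congr_fun measurableSet_Ioc fun t ht =>
    (integral_Ioc_ite_le_mul y hc (pow_pos ht.1 2)).symm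

section Swap

variable {α β γ E : Type*} [MeasurableSpace α] [MeasurableSpace β] [MeasurableSpace γ]
  [NormedAddCommGroup E] [NormedSpace ℝ E] {μ : Measure α} {ν : Measure β} {ρ : Measure γ}
  [IsFiniteMeasure μ] [IsFiniteMeasure ν] [IsFiniteMeasure ρ]

theorem integral_integral_swap_of_norm_le {f : α → β → E}
    (hf : AEStronglyMeasurable (Function.uncurry f) (μ.prod ν)) {C : ℝ}
    (hC : ∀ x y, ‖f x y‖ ≤ C) :
    ∫ x, ∫ y, f x y ∂ν ∂μ = ∫ y, ∫ x, f x y ∂μ ∂ν :=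
  integral_integral_swap (Integrable.of_bound hf C (ae_of_all _ fun p => hC p.1 p.2))

theorem integral_integral_integral_comm_of_norm_le {f : α → β → γ → E}
    (hf : StronglyMeasurable fun p : α × β × γ => f p.1 p.2.1 p.2.2) {C : ℝ}
    (hC : ∀ x y z, ‖f x y z‖ ≤ C) :
    ∫ z, ∫ x, ∫ y, f x y z ∂ν ∂μ ∂ρ = ∫ x, ∫ y, ∫ z, f x y z ∂ρ ∂ν ∂μ := by
  have hinner : StronglyMeasurable fun p : γ × α => ∫ y, f p.2 y p.1 ∂ν :=
    (hf.comp_measurable (by fun_prop : Measurable fun q : (γ × α) × β => (q.1.2, q.2, q.1.1))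
      ).integral_prod_right'
  rw [integral_integral_swap_of_norm_le (f := fun z x => ∫ y, f x y z ∂ν)
    hinner.aestronglyMeasurable (C := C * ν.real univ)
    fun z x => norm_integral_le_of_norm_le_const (ae_of_all _ (hC x · z))]
  refine integral_congr_ae (ae_of_all _ fun x => ?_)
  exact integral_integral_swap_of_norm_le (f := fun z y => f x y z)
    (hf.comp_measurable (by fun_prop : Measurable fun q : γ × β => (x, q.2, q.1))
      ).aestronglyMeasurable fun z y => hC x y z

end Swap

theorem stmt_5_general (F : ℝ → ℝ) (hmono : Monotone F)
    (hF0 : ∀ x ≤ (0:ℝ), F x = 0)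
    (hleftcont : ∀ x, ContinuousWithinAt F (Set.Iio x) x)
    (Finv : ℝ → ℝ) (hFinv : ∀ u, 0 ≤ u → IsLUB {l : ℝ | 0 ≤ l ∧ F l ≤ u} (Finv u))
    (ψ : ℝ → ℝ)
    (hψ : ∀ y, ψ y = ∫ l in (0:ℝ)..(Finv y), (Real.sqrt y - Real.sqrt (F l)) ^ 2)
    (y : ℝ) (hy : 0 ≤ y) :
    ψ y = ∫ t in (0:ℝ)..1, ∫ u in (0:ℝ)..y, Finv (t ^ 2 * u) := by
  have hFzero : F 0 = 0 := hF0 0 le_rfl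
  have hFinv_nonneg : 0 ≤ Finv y := (hFinv y hy).1 ⟨le_rfl, hFzero.le.trans hy⟩
  have hind : StronglyMeasurable fun p : ℝ × ℝ × ℝ =>
      if F p.2.2 ≤ p.1 ^ 2 * p.2.1 then (1 : ℝ) else 0 :=
    (Measurable.ite (measurableSet_le (hmono.measurable.comp (by fun_prop)) (by fun_prop))
      measurable_const measurable_const).stronglyMeasurable
  rw [hψ, intervalIntegral.integral_of_le hFinv_nonneg, intervalIntegral.integral_of_le zero_le_one]
  calc ∫ l in Ioc 0 (Finv y), (√y - √(F l)) ^ 2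
      = ∫ l in Ioc 0 (Finv y), ∫ t in Ioc 0 1, ∫ u in Ioc 0 y,
          (if F l ≤ t ^ 2 * u then (1 : ℝ) else 0) :=
        setIntegral_congr_fun measurableSet_Ioc fun l hl =>
          sq_sqrt_sub_sqrt_eq_integral_Ioc_ite (hFzero.ge.trans (hmono hl.1.le))
            ((le_iff_le_of_isLUB hmono (hleftcont _) (hFinv y hy) hl.1.le).2 hl.2)
    _ = ∫ t in Ioc 0 1, ∫ u in Ioc 0 y, ∫ l in Ioc 0 (Finv y),
          (if F l ≤ t ^ 2 * u then (1 : ℝ) else 0) :=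
        integral_integral_integral_comm_of_norm_le hind (C := 1) fun _ _ _ => by
          split_ifs <;> norm_num
    _ = ∫ t in Ioc 0 1, ∫ u in (0 : ℝ)..y, Finv (t ^ 2 * u) := by
        refine setIntegral_congr_fun measurableSet_Ioc fun t ht => ?_
        rw [intervalIntegral.integral_of_le hy]
        refine setIntegral_congr_fun measurableSet_Ioc fun u hu => ?_
        have hv : 0 ≤ t ^ 2 * u := by have := hu.1; positivity
        have hvy : t ^ 2 * u ≤ y :=
          (mul_le_of_le_one_left hu.1.le (pow_le_one₀ ht.1.le ht.2)).trans hu.2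
        exact integral_Ioc_ite_le_eq_of_isLUB hmono (hleftcont _) (hFzero.le.trans hv) hvy (hFinv _ hv)
          (hFinv y hy)

/-- Identity (41)–(12): for `F : [0,∞) → [0,∞)` increasing, left-continuous with
`F 0 = 0`, the function `ψ(y) = ∫₀^{F⁻¹(y)} (√y − √(F λ))² dλ` equals
`∫₀^1 ∫₀^y F⁻¹(t²u) du dt`. -/
theorem stmt_5 (F : ℝ → ℝ) (hmono : Monotone F) (hnn : ∀ x, 0 ≤ F x)
    (hF0 : ∀ x ≤ (0:ℝ), F x = 0)
    (hleftcont : ∀ x, ContinuousWithinAt F (Set.Iio x) x)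
    (Finv : ℝ → ℝ) (hFinv : ∀ u, 0 ≤ u → IsLUB {l : ℝ | 0 ≤ l ∧ F l ≤ u} (Finv u))
    (ψ : ℝ → ℝ)
    (hψ : ∀ y, ψ y = ∫ l in (0:ℝ)..(Finv y), (Real.sqrt y - Real.sqrt (F l)) ^ 2)
    (y : ℝ) (hy : 0 ≤ y) :
    ψ y = ∫ t in (0:ℝ)..1, ∫ u in (0:ℝ)..y, Finv (t ^ 2 * u) :=
  stmt_5_general F hmono hF0 hleftcont Finv hFinv ψ hψ y hy
end

section
/- Let ρ be a trace-class positive operator on L²(ℝⁿ) with Fourier conjugate density g = dν_{ρ̂}/d*ξ ∈ L¹, distribution function F_{ρ̂}(y) = vol*({g > y}). Then S_F(ρ̂) := ∫₀^∞ F_{ρ̂}(y) ln F_{ρ̂}(y) dy satisfies S_F(ρ̂) ≤ S_ξ(ρ̂) + τ(ρ)(1 + ln τ(ρ)), where S_ξ(ρ̂) = −∫_{ℝⁿ} ln(g) g d*ξ. -/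
/-!
Write `F t = μ {f > t}`. The layer-cake formula with weight `log t + 1 = (t log t)'`, split into
its positive and negative parts, gives `∫ f log f - ∫ f = ∫₀^∞ F(t) log t dt`, and with weight `1`
it gives `τ = ∫ f = ∫₀^∞ F`. Chebyshev's inequality `t F(t) ≤ τ` yields pointwise
`F log F ≤ F log τ - F log t`, and integrating over `t > 0` gives the bound.
-/

open MeasureTheory Set Real

theorem integral_log_add_one (a : ℝ) : ∫ t in (0 : ℝ)..a, (log t + 1) = a * log a := by
  rw [intervalIntegral.integral_add intervalIntegral.intervalIntegrable_log'
    intervalIntegrable_const, integral_log]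
  simp

theorem IntervalIntegrable.posPart {f : ℝ → ℝ} {a b : ℝ} {μ : Measure ℝ}
    (hf : IntervalIntegrable f μ a b) : IntervalIntegrable (fun t => (f t)⁺) μ a b :=
  ⟨hf.1.pos_part, hf.2.pos_part⟩

theorem IntervalIntegrable.negPart {f : ℝ → ℝ} {a b : ℝ} {μ : Measure ℝ}
    (hf : IntervalIntegrable f μ a b) : IntervalIntegrable (fun t => (f t)⁻) μ a b :=
  ⟨hf.1.neg_part, hf.2.neg_part⟩

theorem integral_negPart_log_add_one_le {a : ℝ} (ha : 0 ≤ a) :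
    ∫ t in 0..a, (log t + 1)⁻ ≤ a + 2 * |a * log a| := by
  have hint : IntervalIntegrable (fun t => log t + 1) volume 0 a :=
    intervalIntegral.intervalIntegrable_log'.add intervalIntegrable_const
  have hpos : ∫ t in 0..a, (log t + 1)⁺ ≤ a * (log a + 1)⁺ :=
    calc ∫ t in 0..a, (log t + 1)⁺ ≤ ∫ t in 0..a, (log a + 1)⁺ :=
          intervalIntegral.integral_mono_on_of_le_Ioo ha hint.posPart intervalIntegrable_const
            fun t ht => posPart_mono (by linarith [log_le_log ht.1 ht.2.le])
      _ = a * (log a + 1)⁺ := by simp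
  have hneg : ∫ t in 0..a, (log t + 1)⁻ = (∫ t in 0..a, (log t + 1)⁺) - a * log a := by
    have hsub := intervalIntegral.integral_sub hint.posPart hint
    beta_reduce at hsub
    rw [integral_log_add_one] at hsub
    rw [← hsub]
    exact intervalIntegral.integral_congr fun t _ => by
      linarith [posPart_sub_negPart (log t + 1)]
  have hbound : (log a + 1)⁺ ≤ |log a| + 1 :=
    sup_le (by linarith [le_abs_self (log a)]) (by positivity)
  rw [abs_mul, abs_of_nonneg ha]
  linarith [mul_le_mul_of_nonneg_left hbound ha,
    mul_le_mul_of_nonneg_left (neg_abs_le (log a)) ha]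

theorem mul_log_le_mul_log_sub_mul_log {x y c : ℝ} (hx : 0 ≤ x) (hy : 0 < y) (h : y * x ≤ c) :
    x * log x ≤ x * log c - x * log y := by
  rcases hx.eq_or_lt with rfl | hx
  · simp
  rw [← mul_sub]
  gcongr
  have := log_le_log (by positivity) h
  rw [log_mul hy.ne' hx.ne'] at this
  linarith

section Layercake

variable {α : Type*} [MeasurableSpace α] {μ : Measure α} {f : α → ℝ}

theorem measurable_meas_lt (μ : Measure α) (f : α → ℝ) :
    Measurable fun t : ℝ => μ {a | t < f a} :=
  Antitone.measurable fun _ _ hst => measure_mono fun _ h => lt_of_le_of_lt hst h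

theorem mul_measureReal_lt_le_integral_of_nonneg (hf_nn : 0 ≤ᵐ[μ] f) (hf : Integrable f μ)
    {ε : ℝ} (hε : 0 < ε) : ε * μ.real {x | ε < f x} ≤ ∫ x, f x ∂μ :=
  calc ε * μ.real {x | ε < f x} ≤ ε * μ.real {x | ε ≤ f x} := by
        gcongr
        · exact (hf.measure_ge_lt_top hε).ne
        · exact le_of_lt
    _ ≤ ∫ x, f x ∂μ := mul_meas_ge_le_integral_of_nonneg hf_nn hf ε

theorem integral_comp_eq_integral_meas_lt_mul_of_nonneg (f_nn : 0 ≤ᵐ[μ] f)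
    (f_mble : AEMeasurable f μ) {w : ℝ → ℝ} (w_mble : Measurable w) (w_nn : ∀ t, 0 ≤ w t)
    (w_intble : ∀ t > 0, IntervalIntegrable w volume 0 t)
    (hint : Integrable (fun ω => ∫ t in 0..f ω, w t) μ) :
    IntegrableOn (fun t => μ.real {a | t < f a} * w t) (Ioi 0) ∧
      ∫ ω, (∫ t in 0..f ω, w t) ∂μ = ∫ t in Ioi 0, μ.real {a | t < f a} * w t := by
  set H : ℝ → ENNReal := fun t => μ {a | t < f a} * ENNReal.ofReal (w t)
  have hH : ∀ t, (H t).toReal = μ.real {a | t < f a} * w t := fun t => by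
    simp [H, ENNReal.toReal_mul, measureReal_def, ENNReal.toReal_ofReal (w_nn t)]
  have hH_mble : Measurable H :=
    (measurable_meas_lt μ f).mul (ENNReal.measurable_ofReal.comp w_mble)
  have key : ∫⁻ ω, ENNReal.ofReal (∫ t in 0..f ω, w t) ∂μ = ∫⁻ t in Ioi 0, H t :=
    lintegral_comp_eq_lintegral_meas_lt_mul μ f_nn f_mble w_intble (ae_of_all _ w_nn)
  have hfin : ∫⁻ t in Ioi 0, H t ≠ ⊤ := key ▸ hint.lintegral_lt_top.ne
  have hprim_nn : 0 ≤ᵐ[μ] fun ω => ∫ t in 0..f ω, w t :=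
    f_nn.mono fun ω hω => intervalIntegral.integral_nonneg hω fun t _ => w_nn t
  simp only [← hH]
  refine ⟨integrable_toReal_of_lintegral_ne_top hH_mble.aemeasurable hfin, ?_⟩
  rw [integral_toReal hH_mble.aemeasurable (ae_lt_top hH_mble hfin), ← key,
    integral_eq_lintegral_of_nonneg_ae hprim_nn hint.aestronglyMeasurable]

theorem integral_comp_eq_integral_meas_lt_mul (f_nn : 0 ≤ᵐ[μ] f) (f_mble : AEMeasurable f μ)
    {w : ℝ → ℝ} (w_mble : Measurable w) (w_intble : ∀ t > 0, IntervalIntegrable w volume 0 t)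
    (hint : Integrable (fun ω => ∫ t in 0..f ω, w t) μ)
    (hint_neg : Integrable (fun ω => ∫ t in 0..f ω, (w t)⁻) μ) :
    IntegrableOn (fun t => μ.real {a | t < f a} * w t) (Ioi 0) ∧
      ∫ ω, (∫ t in 0..f ω, w t) ∂μ = ∫ t in Ioi 0, μ.real {a | t < f a} * w t := by
  have hw_intble : ∀ b ≥ 0, IntervalIntegrable w volume 0 b := fun b hb =>
    hb.eq_or_lt.elim (fun h => h ▸ IntervalIntegrable.refl) (w_intble b)
  have hprim : ∀ᵐ ω ∂μ,
      ∫ t in 0..f ω, (w t)⁺ = (∫ t in 0..f ω, w t) + ∫ t in 0..f ω, (w t)⁻ :=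
    f_nn.mono fun ω hω => by
      rw [← intervalIntegral.integral_add (hw_intble _ hω) (hw_intble _ hω).negPart]
      exact intervalIntegral.integral_congr fun t _ =>
        sub_eq_iff_eq_add.1 (posPart_sub_negPart (w t))
  obtain ⟨hI_pos, h_pos⟩ := integral_comp_eq_integral_meas_lt_mul_of_nonneg f_nn f_mble
    w_mble.posPart (fun _ => posPart_nonneg _) (fun t ht => (w_intble t ht).posPart)
    ((hint.add hint_neg).congr (hprim.mono fun _ h => h.symm))
  obtain ⟨hI_neg, h_neg⟩ := integral_comp_eq_integral_meas_lt_mul_of_nonneg f_nn f_mble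
    w_mble.negPart (fun _ => negPart_nonneg _) (fun t ht => (w_intble t ht).negPart) hint_neg
  have hsplit : ∀ t, μ.real {a | t < f a} * w t
      = μ.real {a | t < f a} * (w t)⁺ - μ.real {a | t < f a} * (w t)⁻ := fun t => by
    rw [← mul_sub, posPart_sub_negPart]
  simp only [hsplit]
  refine ⟨hI_pos.sub hI_neg, ?_⟩
  rw [integral_sub hI_pos hI_neg, ← h_pos, ← h_neg, integral_congr_ae hprim,
    integral_add hint hint_neg, add_sub_cancel_right]

theorem MeasureTheory.Integrable.integrableOn_meas_lt (hf : Integrable f μ) (f_nn : 0 ≤ᵐ[μ] f) :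
    IntegrableOn (fun t => μ.real {a | t < f a}) (Ioi 0) := by
  simpa using (integral_comp_eq_integral_meas_lt_mul_of_nonneg f_nn hf.aemeasurable
    measurable_const (fun _ => zero_le_one) (fun _ _ => intervalIntegrable_const)
    (by simpa using hf)).1

theorem integral_mul_log_sub_integral_eq_integral_meas_lt_mul_log (f_nn : 0 ≤ᵐ[μ] f)
    (hf : Integrable f μ) (hflog : Integrable (fun ω => f ω * log (f ω)) μ) :
    IntegrableOn (fun t => μ.real {a | t < f a} * log t) (Ioi 0) ∧
      ∫ ω, f ω * log (f ω) ∂μ - ∫ ω, f ω ∂μ = ∫ t in Ioi 0, μ.real {a | t < f a} * log t := by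
  have hlog_intble : ∀ a b : ℝ, IntervalIntegrable (fun t => log t + 1) volume a b :=
    fun _ _ => intervalIntegral.intervalIntegrable_log'.add intervalIntegrable_const
  have hneg : Integrable (fun ω => ∫ t in 0..f ω, (log t + 1)⁻) μ := by
    refine Integrable.mono' (hf.add (hflog.abs.const_mul 2)) ?_ ?_
    · exact (intervalIntegral.continuous_primitive (fun a b => (hlog_intble a b).negPart)
        0).comp_aestronglyMeasurable hf.aestronglyMeasurable
    · filter_upwards [f_nn] with ω (hω : 0 ≤ f ω)
      rw [norm_of_nonneg (intervalIntegral.integral_nonneg hω fun _ _ => negPart_nonneg _)]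
      exact integral_negPart_log_add_one_le hω
  obtain ⟨hI, h⟩ := integral_comp_eq_integral_meas_lt_mul (w := fun t => log t + 1) f_nn
    hf.aemeasurable (measurable_log.add measurable_const) (fun t _ => hlog_intble 0 t)
    (by simpa only [integral_log_add_one] using hflog) hneg
  simp only [integral_log_add_one, mul_add_one] at hI h
  have hF := hf.integrableOn_meas_lt f_nn
  refine ⟨(hI.sub hF).congr_fun (fun t _ => by simp) measurableSet_Ioi, ?_⟩
  rw [h, hf.integral_eq_integral_meas_lt f_nn, ← integral_sub hI hF]
  simp

end Layercake

theorem stmt_15_general (n : ℕ) (m : Measure (EuclideanSpace ℝ (Fin n)))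
    (g : EuclideanSpace ℝ (Fin n) → ℝ) (hgnn : ∀ ξ, 0 ≤ g ξ)
    (hgint : Integrable g m)
    (τ : ℝ) (hτ : τ = ∫ ξ, g ξ ∂m)
    (F : ℝ → ℝ) (hF : ∀ y, F y = (m {ξ | y < g ξ}).toReal)
    (hFlog : IntegrableOn (fun y => F y * Real.log (F y)) (Set.Ioi 0))
    (hglog : Integrable (fun ξ => g ξ * Real.log (g ξ)) m) :
    (∫ y in Set.Ioi (0:ℝ), F y * Real.log (F y)) ≤
      (-∫ ξ, g ξ * Real.log (g ξ) ∂m) + τ * (1 + Real.log τ) := by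
  obtain rfl : F = fun y => m.real {ξ | y < g ξ} := funext hF
  have hg_nn : 0 ≤ᵐ[m] g := ae_of_all _ hgnn
  have hτF : τ = ∫ y in Ioi 0, m.real {ξ | y < g ξ} :=
    hτ.trans (hgint.integral_eq_integral_meas_lt hg_nn)
  have hIF := hgint.integrableOn_meas_lt hg_nn
  obtain ⟨hI_log, h_log⟩ :=
    integral_mul_log_sub_integral_eq_integral_meas_lt_mul_log hg_nn hgint hglog
  have hrhs : (-∫ ξ, g ξ * log (g ξ) ∂m) + τ * (1 + log τ)
      = ∫ y in Ioi 0, (m.real {ξ | y < g ξ} * log τ - m.real {ξ | y < g ξ} * log y) := by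
    rw [integral_sub (hIF.mul_const _) hI_log, integral_mul_const, ← hτF, ← h_log, ← hτ]
    ring
  rw [hrhs]
  refine setIntegral_mono_on hFlog ((hIF.mul_const _).sub hI_log) measurableSet_Ioi fun y hy => ?_
  exact mul_log_le_mul_log_sub_mul_log measureReal_nonneg hy
    (hτ ▸ mul_measureReal_lt_le_integral_of_nonneg hg_nn hgint hy)

/-- Equation (53) (proof of Corollary 1.5): for a trace-class positive operator
`ρ` on `L²(ℝⁿ)` with Fourier-side density `g = dν_{ρ̂}/d*ξ ∈ L¹(d*ξ)`,
`τ(ρ) = ∫ g d*ξ` and distribution function `F_{ρ̂}(y) = vol*({g > y})`, one has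
`S_F(ρ̂) = ∫₀^∞ F_{ρ̂} ln F_{ρ̂} dy ≤ S_ξ(ρ̂) + τ(ρ)(1 + ln τ(ρ))` where
`S_ξ(ρ̂) = −∫ g ln g d*ξ`. -/
theorem stmt_15 (n : ℕ) (m : Measure (EuclideanSpace ℝ (Fin n)))
    (hm : m = (ENNReal.ofReal ((2 * Real.pi) ^ n))⁻¹ • volume)
    (g : EuclideanSpace ℝ (Fin n) → ℝ) (hgnn : ∀ ξ, 0 ≤ g ξ)
    (hgint : Integrable g m)
    (τ : ℝ) (hτ : τ = ∫ ξ, g ξ ∂m)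
    (F : ℝ → ℝ) (hF : ∀ y, F y = (m {ξ | y < g ξ}).toReal)
    (hFlog : IntegrableOn (fun y => F y * Real.log (F y)) (Set.Ioi 0))
    (hglog : Integrable (fun ξ => g ξ * Real.log (g ξ)) m) :
    (∫ y in Set.Ioi (0:ℝ), F y * Real.log (F y)) ≤
      (-∫ ξ, g ξ * Real.log (g ξ) ∂m) + τ * (1 + Real.log τ) :=
  stmt_15_general n m g hgnn hgint τ hτ F hF hFlog hglog
end

section
/- For any integrable nonnegative function g on a measure space with distribution function F(y) = m({g > y}), one has y·F(y) ≤ ∫ g dm for every y > 0 (Chebyshev/Markov inequality), and consequently ∫₀^∞ ln(yF(y)) F(y) dy ≤ (∫ g dm) ln(∫ g dm) provided the integrals converge. -/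
/-! Markov's inequality gives `y F(y) ≤ ∫ g` for `y > 0`, so pointwise
`F log (y F) ≤ F log (∫ g)` (both sides vanish where `F = 0`). Integrating over `(0, ∞)` and
using the layer cake formula `∫₀^∞ F = ∫ g` gives the entropy bound. -/

open MeasureTheory Set

namespace MeasureTheory

variable {α : Type*} [MeasurableSpace α] {μ : Measure α} {f : α → ℝ}

theorem Integrable.mul_measureReal_lt_le_integral (hf : Integrable f μ) (hf_nn : 0 ≤ᵐ[μ] f)
    {y : ℝ} (hy : 0 < y) : y * μ.real {x | y < f x} ≤ ∫ x, f x ∂μ :=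
  calc y * μ.real {x | y < f x}
      ≤ y * μ.real {x | y ≤ f x} := by
        gcongr
        · exact (hf.measure_ge_lt_top hy).ne
        · exact le_of_lt
    _ ≤ ∫ x, f x ∂μ := mul_meas_ge_le_integral_of_nonneg hf_nn hf y

theorem Integrable.integrableOn_measureReal_lt (hf : Integrable f μ) (hf_nn : 0 ≤ᵐ[μ] f) :
    IntegrableOn (fun t => μ.real {x | t < f x}) (Ioi 0) := by
  have h_anti : Antitone fun t : ℝ => μ {x | t < f x} :=
    fun _ _ hst => measure_mono fun _ h => hst.trans_lt h
  refine ⟨h_anti.measurable.ennreal_toReal.aestronglyMeasurable, ?_⟩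
  rw [hasFiniteIntegral_iff_ofReal (ae_of_all _ fun _ => measureReal_nonneg)]
  calc ∫⁻ t in Ioi 0, ENNReal.ofReal (μ.real {x | t < f x})
      = ∫⁻ t in Ioi 0, μ {x | t < f x} :=
        setLIntegral_congr_fun measurableSet_Ioi fun t ht =>
          ENNReal.ofReal_toReal (hf.measure_gt_lt_top ht).ne
    _ = ∫⁻ x, ENNReal.ofReal (f x) ∂μ :=
        (lintegral_eq_lintegral_meas_lt μ hf_nn hf.aemeasurable).symm
    _ < ⊤ := hf.lintegral_lt_top

end MeasureTheory

theorem setIntegral_mul_log_mul_le {F : ℝ → ℝ} {c : ℝ} (hF_nn : ∀ y, 0 < y → 0 ≤ F y)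
    (hF : IntegrableOn F (Ioi 0)) (hF_le : ∀ y, 0 < y → y * F y ≤ c)
    (hFlog : IntegrableOn (fun y => F y * Real.log (y * F y)) (Ioi 0)) :
    ∫ y in Ioi 0, F y * Real.log (y * F y) ≤ (∫ y in Ioi 0, F y) * Real.log c := by
  have h_pointwise : ∀ y ∈ Ioi (0 : ℝ), F y * Real.log (y * F y) ≤ F y * Real.log c := by
    intro y (hy : 0 < y)
    rcases (hF_nn y hy).eq_or_lt with h | h
    · simp [← h]
    · exact mul_le_mul_of_nonneg_left (Real.log_le_log (mul_pos hy h) (hF_le y hy)) h.le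
  calc ∫ y in Ioi 0, F y * Real.log (y * F y)
      ≤ ∫ y in Ioi 0, F y * Real.log c :=
        setIntegral_mono_on hFlog (hF.mul_const _) measurableSet_Ioi h_pointwise
    _ = (∫ y in Ioi 0, F y) * Real.log c := integral_mul_const _ _

theorem stmt_16_general {α : Type*} [MeasurableSpace α] (m : Measure α)
    (g : α → ℝ) (hgnn : ∀ x, 0 ≤ g x) (hgint : Integrable g m)
    (F : ℝ → ℝ) (hF : ∀ y, F y = (m {x | y < g x}).toReal) :
    (∀ y : ℝ, 0 < y → y * F y ≤ ∫ x, g x ∂m) ∧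
    (IntegrableOn (fun y => F y * Real.log (y * F y)) (Set.Ioi 0) →
      (∫ y in Set.Ioi (0:ℝ), F y * Real.log (y * F y)) ≤
        (∫ x, g x ∂m) * Real.log (∫ x, g x ∂m)) := by
  obtain rfl : F = fun y => m.real {x | y < g x} := funext hF
  have hg_nn : 0 ≤ᵐ[m] g := ae_of_all _ hgnn
  have markov : ∀ y : ℝ, 0 < y → y * m.real {x | y < g x} ≤ ∫ x, g x ∂m :=
    fun _ hy => hgint.mul_measureReal_lt_le_integral hg_nn hy
  refine ⟨markov, fun hFlog => ?_⟩
  calc _ ≤ (∫ y in Ioi 0, m.real {x | y < g x}) * Real.log (∫ x, g x ∂m) :=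
        setIntegral_mul_log_mul_le (fun _ _ => measureReal_nonneg)
          (hgint.integrableOn_measureReal_lt hg_nn) markov hFlog
    _ = _ := by rw [← hgint.integral_eq_integral_meas_lt hg_nn]

/-- Chebyshev/Markov inequality `y·F(y) ≤ ∫ g dm` for the distribution
function `F(y) = m({g > y})` of a nonnegative integrable `g`, and the
consequent entropy comparison
`∫₀^∞ ln(y F(y)) F(y) dy ≤ (∫ g dm) ln(∫ g dm)` provided the integral
converges (§4.4). -/
theorem stmt_16 {α : Type*} [MeasurableSpace α] (m : Measure α)
    (g : α → ℝ) (hgnn : ∀ x, 0 ≤ g x) (hgint : Integrable g m)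
    (hgmeas : Measurable g)
    (F : ℝ → ℝ) (hF : ∀ y, F y = (m {x | y < g x}).toReal) :
    (∀ y : ℝ, 0 < y → y * F y ≤ ∫ x, g x ∂m) ∧
    (IntegrableOn (fun y => F y * Real.log (y * F y)) (Set.Ioi 0) →
      (∫ y in Set.Ioi (0:ℝ), F y * Real.log (y * F y)) ≤
        (∫ x, g x ∂m) * Real.log (∫ x, g x ∂m)) :=
  stmt_16_general m g hgnn hgint F hF
end

section
/- The function h(t) = 1 + ln(cosh t) − t coth t is nonnegative and increasing on (0,∞), and h(t) → 0 as t → 0⁺. -/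
/-!
Since `cosh² - sinh² = 1`, the derivative of `h = oscillatorGap` simplifies to
`(t cosh t - sinh t) / (sinh² t · cosh t)`, which is positive for `t > 0` because
`t cosh t - sinh t` vanishes at `0` and has derivative `t sinh t > 0`. As `t → 0`,
`log (cosh t) → 0` and `t coth t = (t / sinh t) cosh t → 1`, so `h(t) → 0`; monotonicity then
gives `h ≥ 0` on `(0, ∞)`.
-/

open Real Set Filter Topology

lemma MonotoneOn.le_of_tendsto_nhdsGT {f : ℝ → ℝ} {a l : ℝ} (hf : MonotoneOn f (Ioi a))
    (hlim : Tendsto f (𝓝[>] a) (𝓝 l)) {t : ℝ} (ht : a < t) : l ≤ f t := by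
  refine le_of_tendsto hlim ?_
  filter_upwards [Ioc_mem_nhdsGT ht] with s hs
  exact hf hs.1 ht hs.2

namespace Real

lemma sinh_lt_mul_cosh {t : ℝ} (ht : 0 < t) : sinh t < t * cosh t := by
  have hmono : StrictMonoOn (fun x => x * cosh x - sinh x) (Ici 0) := by
    refine strictMonoOn_of_hasDerivWithinAt_pos (f' := fun x => x * sinh x) (convex_Ici 0)
      (by fun_prop) (fun x _ => ?_) (fun x hx => ?_)
    · have hd := ((hasDerivAt_id x).mul (hasDerivAt_cosh x)).sub (hasDerivAt_sinh x)
      exact (hd.congr_deriv (by simp)).hasDerivWithinAt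
    · rw [interior_Ici] at hx
      exact mul_pos hx (sinh_pos_iff.mpr hx)
  simpa using hmono self_mem_Ici ht.le ht

lemma tendsto_mul_cosh_div_sinh_nhdsNE_zero :
    Tendsto (fun t => t * (cosh t / sinh t)) (𝓝[≠] 0) (𝓝 1) := by
  have hslope : Tendsto (fun t => sinh t / t) (𝓝[≠] 0) (𝓝 1) := by
    have := (hasDerivAt_sinh 0).tendsto_slope
    rw [cosh_zero] at this
    exact this.congr fun t => by simp [slope_def_field]
  have hcosh : Tendsto cosh (𝓝[≠] 0) (𝓝 1) := by
    simpa using (continuous_cosh.tendsto 0).mono_left nhdsWithin_le_nhds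
  simpa [mul_div_assoc', div_mul_eq_mul_div, mul_comm] using (hslope.inv₀ one_ne_zero).mul hcosh

end Real

noncomputable def oscillatorGap (t : ℝ) : ℝ := 1 + log (cosh t) - t * (cosh t / sinh t)

lemma hasDerivAt_oscillatorGap {x : ℝ} (hx : x ≠ 0) :
    HasDerivAt oscillatorGap ((x * cosh x - sinh x) / (sinh x ^ 2 * cosh x)) x := by
  have hs : sinh x ≠ 0 := sinh_ne_zero.mpr hx
  have hc : cosh x ≠ 0 := (cosh_pos x).ne'
  have hd := ((hasDerivAt_const x (1 : ℝ)).add ((hasDerivAt_cosh x).log hc)).sub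
    ((hasDerivAt_id x).mul ((hasDerivAt_cosh x).div (hasDerivAt_sinh x) hs))
  refine hd.congr_deriv ?_
  simp only [Pi.div_apply, id]
  field_simp
  linear_combination (x * cosh x - sinh x) * cosh_sq_sub_sinh_sq x

lemma strictMonoOn_oscillatorGap : StrictMonoOn oscillatorGap (Ioi 0) := by
  refine strictMonoOn_of_hasDerivWithinAt_pos (convex_Ioi 0)
    (fun x hx => (hasDerivAt_oscillatorGap (ne_of_gt hx)).continuousAt.continuousWithinAt)
    (fun x hx => (hasDerivAt_oscillatorGap (ne_of_gt (interior_subset hx))).hasDerivWithinAt)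
    (fun x hx => ?_)
  rw [interior_Ioi, mem_Ioi] at hx
  exact div_pos (sub_pos.mpr (sinh_lt_mul_cosh hx)) (by positivity [sinh_pos_iff.mpr hx])

lemma tendsto_oscillatorGap_nhdsNE_zero : Tendsto oscillatorGap (𝓝[≠] 0) (𝓝 0) := by
  have hlog : Tendsto (fun t => log (cosh t)) (𝓝[≠] 0) (𝓝 0) := by
    have hcont : Continuous fun t => log (cosh t) :=
      continuous_cosh.log fun t => (cosh_pos t).ne'
    simpa using (hcont.tendsto 0).mono_left nhdsWithin_le_nhds
  show Tendsto (fun t => 1 + log (cosh t) - t * (cosh t / sinh t)) _ _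
  simpa using (tendsto_const_nhds (x := (1 : ℝ))).add hlog |>.sub
    tendsto_mul_cosh_div_sinh_nhdsNE_zero

/-- §4.5: the function `h(t) = 1 + ln(cosh t) − t coth t` is nonnegative and
increasing on `(0,∞)`, and `h(t) → 0` as `t → 0⁺`. -/
theorem stmt_18 (h : ℝ → ℝ)
    (hh : ∀ t, h t = 1 + Real.log (Real.cosh t) - t * (Real.cosh t / Real.sinh t)) :
    (∀ t ∈ Set.Ioi (0:ℝ), 0 ≤ h t) ∧
    MonotoneOn h (Set.Ioi 0) ∧
    Filter.Tendsto h (nhdsWithin 0 (Set.Ioi 0)) (nhds 0) := by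
  obtain rfl : h = oscillatorGap := funext hh
  have hmono : MonotoneOn oscillatorGap (Ioi 0) := strictMonoOn_oscillatorGap.monotoneOn
  have hlim : Tendsto oscillatorGap (𝓝[>] 0) (𝓝 0) :=
    tendsto_oscillatorGap_nhdsNE_zero.mono_left (nhdsWithin_mono 0 fun _ ht => ne_of_gt ht)
  exact ⟨fun t ht => hmono.le_of_tendsto_nhdsGT hlim ht, hmono, hlim⟩
end
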